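/- arXiv:2501.19144 — 3 statements merged into one kernel-verified Lean document; each statement's English description precedes it below -/
import Mathlib

section
/- Suppose a game satisfies (δ, μ)-smoothness: for all pure action profiles a, a_⋆ ∈ A and every state z ∈ Z, ∑_{j} ⟨z, φ_j(a^j_⋆, a^{-j})⟩ ≤ ∑_j [δ ⟨z, φ_j(a_⋆)⟩ + μ ⟨z, φ_j(a)⟩] with 0 < μ < 1. Let C_t(w_t) = ∑_j c^j(w_t, Z_t) be the social cost at time t, let C^⋆ = min over pure policies ρ : Z → A of T^{-1} ∑_t ∑_j c^j(ρ(Z_t), Z_t), and let R^j_T be the contextual external regret of agent j. Then T^{-1} ∑_{t=1}^T C_t(w_t) ≤ γ C^⋆ + (1-μ)^{-1} T^{-1} ∑_j R^j_T, where γ = δ(1-μ)^{-1}. -/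
/-!
In round `t` let every player `j` deviate unilaterally to the pure action `ρ⋆(Z_t) j` of the
comparator policy. Averaging the smoothness inequality over the product distribution `w_t`
bounds the total cost of these deviations by `δ C_t(ρ⋆) + μ C_t(w_t)`. On each context `z` the
contextual comparator `π⋆(z)` does at least as well as the point mass on `ρ⋆(z) j`, so summing
over rounds, `∑_t C_t(w_t) - ∑_j R_j ≤ δ T C⋆ + μ ∑_t C_t(w_t)`; rearranging gives the bound.
-/

open Finset

theorem Equiv.update_piSplitAt_symm {J : Type*} [DecidableEq J] {A : J → Type*} (j : J)
    (c b : A j) (r : ∀ i : {i // i ≠ j}, A i) :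
    Function.update ((piSplitAt j A).symm (c, r)) j b = (piSplitAt j A).symm (b, r) := by
  ext i
  by_cases h : i = j
  · subst h; simp
  · simp [h]

section
variable {J : Type*} [Fintype J] [DecidableEq J] {A : J → Type*} [∀ i, Fintype (A i)]

def prodExpect (W : ∀ i, A i → ℝ) (f : (∀ i, A i) → ℝ) : ℝ :=
  ∑ a, (∏ i, W i (a i)) * f a

theorem prodExpect_eq_sum_piSplitAt (W : ∀ i, A i → ℝ) (f : (∀ i, A i) → ℝ) (j : J) :
    prodExpect W f = ∑ c, W j c * ∑ r : (∀ i : {i // i ≠ j}, A i),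
      (∏ i : {i // i ≠ j}, W i (r i)) * f ((Equiv.piSplitAt j A).symm (c, r)) := by
  rw [prodExpect, ← (Equiv.piSplitAt j A).symm.sum_comp, Fintype.sum_prod_type]
  refine sum_congr rfl fun c _ => ?_
  rw [mul_sum]
  refine sum_congr rfl fun r _ => ?_
  rw [Fintype.prod_eq_mul_prod_subtype_ne _ j, mul_assoc]
  congr 2
  · simp
  · exact prod_congr rfl fun i _ => by simp [i.2]

theorem prodExpect_update_single [∀ i, DecidableEq (A i)] (W : ∀ i, A i → ℝ) (f : (∀ i, A i) → ℝ)
    {j : J} (hW : ∑ c, W j c = 1) (b : A j) :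
    prodExpect (Function.update W j (Pi.single b 1)) f =
      prodExpect W (fun a => f (Function.update a j b)) := by
  rw [prodExpect_eq_sum_piSplitAt _ _ j, prodExpect_eq_sum_piSplitAt _ _ j]
  simp only [Equiv.update_piSplitAt_symm, ← sum_mul, hW, one_mul]
  have hne (i : {i // i ≠ j}) (v : A j → ℝ) : Function.update W j v i = W i :=
    Function.update_of_ne i.2 _ _
  simp only [hne, Function.update_self, Pi.single_apply, ite_mul, one_mul, zero_mul, sum_ite_eq',
    mem_univ, if_true]

theorem prodExpect_sum {ι : Type*} (s : Finset ι) (W : ∀ i, A i → ℝ) (f : ι → (∀ i, A i) → ℝ) :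
    prodExpect W (fun a => ∑ k ∈ s, f k a) = ∑ k ∈ s, prodExpect W (f k) := by
  simp only [prodExpect, mul_sum]
  exact sum_comm

theorem prodExpect_mono {W : ∀ i, A i → ℝ} (hW : ∀ i c, 0 ≤ W i c) {f g : (∀ i, A i) → ℝ}
    (hfg : ∀ a, f a ≤ g a) : prodExpect W f ≤ prodExpect W g :=
  sum_le_sum fun a _ => mul_le_mul_of_nonneg_left (hfg a) (prod_nonneg fun i _ => hW i (a i))

theorem prodExpect_const_add_mul {W : ∀ i, A i → ℝ} (hW : ∀ i, ∑ c, W i c = 1)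
    (x y : ℝ) (f : (∀ i, A i) → ℝ) :
    prodExpect W (fun a => x + y * f a) = x + y * prodExpect W f := by
  have hmass : ∑ a : ∀ i, A i, ∏ i, W i (a i) = 1 := by
    rw [← Fintype.piFinset_univ, ← prod_univ_sum]
    exact prod_eq_one fun i _ => hW i
  simp only [prodExpect, mul_add, sum_add_distrib, ← sum_mul, hmass, one_mul, mul_sum]
  congr 1
  exact sum_congr rfl fun a _ => by ring

def IsSmooth (δ μ : ℝ) (u : J → (∀ i, A i) → ℝ) : Prop :=
  ∀ a b : ∀ i, A i, ∑ j, u j (Function.update a j (b j)) ≤ ∑ j, (δ * u j b + μ * u j a)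

theorem IsSmooth.sum_prodExpect_deviation_le [∀ i, DecidableEq (A i)] {δ μ : ℝ}
    {u : J → (∀ i, A i) → ℝ} (hu : IsSmooth δ μ u) {W : ∀ i, A i → ℝ}
    (hW0 : ∀ i c, 0 ≤ W i c) (hW1 : ∀ i, ∑ c, W i c = 1) (b : ∀ i, A i) :
    ∑ j, prodExpect (Function.update W j (Pi.single (b j) 1)) (u j) ≤
      δ * ∑ j, u j b + μ * ∑ j, prodExpect W (u j) := calc
  _ = prodExpect W (fun a => ∑ j, u j (Function.update a j (b j))) := by
    rw [prodExpect_sum]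
    exact sum_congr rfl fun j _ => prodExpect_update_single W (u j) (hW1 j) (b j)
  _ ≤ prodExpect W (fun a => δ * ∑ j, u j b + μ * ∑ j, u j a) :=
    prodExpect_mono hW0 fun a => by
      simpa only [sum_add_distrib, ← mul_sum] using hu a b
  _ = δ * ∑ j, u j b + μ * ∑ j, prodExpect W (u j) := by
    rw [prodExpect_const_add_mul hW1, prodExpect_sum]

end

theorem sum_comp_le_of_forall_fiber_le {τ Z P : Type*} [Fintype τ] [DecidableEq Z]
    (Zt : τ → Z) (cost : P → τ → ℝ) (π ρ : Z → P)
    (h : ∀ z, ∑ t ∈ univ.filter (fun t => Zt t = z), cost (π z) t ≤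
      ∑ t ∈ univ.filter (fun t => Zt t = z), cost (ρ z) t) :
    ∑ t, cost (π (Zt t)) t ≤ ∑ t, cost (ρ (Zt t)) t := by
  have hmaps : ∀ t ∈ (univ : Finset τ), Zt t ∈ univ.image Zt :=
    fun t _ => mem_image_of_mem _ (mem_univ t)
  rw [← sum_fiberwise_of_maps_to hmaps, ← sum_fiberwise_of_maps_to hmaps]
  refine sum_le_sum fun z _ => ?_
  have hfiber (σ : Z → P) : ∑ t ∈ univ.filter (fun t => Zt t = z), cost (σ (Zt t)) t =
      ∑ t ∈ univ.filter (fun t => Zt t = z), cost (σ z) t :=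
    sum_congr rfl fun t ht => by rw [(mem_filter.mp ht).2]
  rw [hfiber, hfiber]
  exact h z

theorem stmt1_general
    (J : Type*) [Fintype J] [DecidableEq J]
    (A : J → Type*) [∀ j, Fintype (A j)]
    (Z : Type*) [DecidableEq Z]
    (T : ℕ) (Zt : Fin T → Z)
    -- u j a z is the scalar cost ⟨z, φ_j(a)⟩
    (u : (j : J) → ((i : J) → A i) → Z → ℝ)
    (δ μ : ℝ) (hμ1 : μ < 1)
    (hsmooth : ∀ a astar : (i : J) → A i, ∀ z : Z,
      ∑ j, u j (Function.update a j (astar j)) z ≤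
        ∑ j, (δ * u j astar z + μ * u j a z))
    -- mixed strategies at each round
    (w : Fin T → (j : J) → A j → ℝ)
    (hw : ∀ t j, (∀ b, 0 ≤ w t j b) ∧ ∑ b, w t j b = 1)
    -- cost of player j at time t when j plays p and the others play w t
    (cdev : (j : J) → (A j → ℝ) → Fin T → ℝ)
    (hcdev : ∀ j p t, cdev j p t =
      ∑ a : (i : J) → A i, (∏ i, (Function.update (w t) j p) i (a i)) * u j a (Zt t))
    -- the per-context optimal comparator
    (πs : (j : J) → Z → A j → ℝ)
    (hπsopt : ∀ j z (p : A j → ℝ), (∀ b, 0 ≤ p b) → ∑ b, p b = 1 →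
      ∑ t ∈ univ.filter (fun t => Zt t = z), cdev j (πs j z) t ≤
        ∑ t ∈ univ.filter (fun t => Zt t = z), cdev j p t)
    -- contextual external regrets
    (R : J → ℝ)
    (hR : ∀ j, R j = ∑ t, (cdev j (w t j) t - cdev j (πs j (Zt t)) t))
    -- optimal average social cost in pure strategy
    (ρstar : Z → (i : J) → A i) (Cstar : ℝ)
    (hCstar : Cstar = (T : ℝ)⁻¹ * ∑ t, ∑ j, u j (ρstar (Zt t)) (Zt t)) :
    (T : ℝ)⁻¹ * ∑ t, ∑ j, cdev j (w t j) t
      ≤ (δ / (1 - μ)) * Cstar + (1 - μ)⁻¹ * ((T : ℝ)⁻¹ * ∑ j, R j) := by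
  classical
  set S := ∑ t, ∑ j, cdev j (w t j) t
  set O := ∑ t, ∑ j, u j (ρstar (Zt t)) (Zt t)
  have hcost (j p t) : cdev j p t = prodExpect (Function.update (w t) j p) (u j · (Zt t)) :=
    hcdev j p t
  have hround (t) : ∑ j, cdev j (Pi.single (ρstar (Zt t) j) 1) t ≤
      δ * ∑ j, u j (ρstar (Zt t)) (Zt t) + μ * ∑ j, cdev j (w t j) t := by
    simp only [hcost, Function.update_eq_self]
    exact IsSmooth.sum_prodExpect_deviation_le (u := fun j a => u j a (Zt t))
      (fun a b => hsmooth a b (Zt t)) (fun j => (hw t j).1) (fun j => (hw t j).2) _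
  have hcomparator (j) : ∑ t, cdev j (πs j (Zt t)) t ≤
      ∑ t, cdev j (Pi.single (ρstar (Zt t) j) 1) t :=
    sum_comp_le_of_forall_fiber_le Zt (cdev j) (πs j) (fun z => Pi.single (ρstar z j) 1)
      fun z => hπsopt j z _ (fun b => by rw [Pi.single_apply]; positivity) (by simp)
  have hregret : ∑ j, R j = S - ∑ t, ∑ j, cdev j (πs j (Zt t)) t := by
    simp only [S, hR, sum_sub_distrib]
    rw [sum_comm, sum_comm (s := univ) (t := univ) (f := fun t j => cdev j (πs j (Zt t)) t)]
  have hbenchmark : ∑ t, ∑ j, cdev j (πs j (Zt t)) t ≤ δ * O + μ * S := calc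
    _ = ∑ j, ∑ t, cdev j (πs j (Zt t)) t := sum_comm
    _ ≤ ∑ j, ∑ t, cdev j (Pi.single (ρstar (Zt t) j) 1) t := sum_le_sum fun j _ => hcomparator j
    _ = ∑ t, ∑ j, cdev j (Pi.single (ρstar (Zt t) j) 1) t := sum_comm
    _ ≤ ∑ t, (δ * ∑ j, u j (ρstar (Zt t)) (Zt t) + μ * ∑ j, cdev j (w t j) t) :=
      sum_le_sum fun t _ => hround t
    _ = δ * O + μ * S := by rw [sum_add_distrib, mul_sum, mul_sum]
  have hkey : (1 - μ) * S ≤ δ * O + ∑ j, R j := by linarith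
  have h1μ : 0 < 1 - μ := by linarith
  rw [hCstar, div_eq_mul_inv]
  calc (T : ℝ)⁻¹ * S = (1 - μ)⁻¹ * ((T : ℝ)⁻¹ * ((1 - μ) * S)) := by field_simp
    _ ≤ (1 - μ)⁻¹ * ((T : ℝ)⁻¹ * (δ * O + ∑ j, R j)) := by gcongr
    _ = _ := by ring

/-- under (δ,μ)-smoothness, average social cost is bounded by
`γ C⋆ + (1-μ)⁻¹ T⁻¹ ∑_j R^j_T` with `γ = δ/(1-μ)`. -/
theorem stmt1
    (J : Type*) [Fintype J] [DecidableEq J]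
    (A : J → Type*) [∀ j, Fintype (A j)] [∀ j, DecidableEq (A j)] [∀ j, Nonempty (A j)]
    (Z : Type*) [DecidableEq Z]
    (T : ℕ) (hT : 0 < T) (Zt : Fin T → Z)
    -- u j a z is the scalar cost ⟨z, φ_j(a)⟩
    (u : (j : J) → ((i : J) → A i) → Z → ℝ)
    (δ μ : ℝ) (hδ : 0 < δ) (hμ0 : 0 < μ) (hμ1 : μ < 1)
    (hsmooth : ∀ a astar : (i : J) → A i, ∀ z : Z,
      ∑ j, u j (Function.update a j (astar j)) z ≤
        ∑ j, (δ * u j astar z + μ * u j a z))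
    -- mixed strategies at each round
    (w : Fin T → (j : J) → A j → ℝ)
    (hw : ∀ t j, (∀ b, 0 ≤ w t j b) ∧ ∑ b, w t j b = 1)
    -- cost of player j at time t when j plays p and the others play w t
    (cdev : (j : J) → (A j → ℝ) → Fin T → ℝ)
    (hcdev : ∀ j p t, cdev j p t =
      ∑ a : (i : J) → A i, (∏ i, (Function.update (w t) j p) i (a i)) * u j a (Zt t))
    -- the per-context optimal comparator
    (πs : (j : J) → Z → A j → ℝ)
    (hπsdist : ∀ j z, (∀ b, 0 ≤ πs j z b) ∧ ∑ b, πs j z b = 1)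
    (hπsopt : ∀ j z (p : A j → ℝ), (∀ b, 0 ≤ p b) → ∑ b, p b = 1 →
      ∑ t ∈ univ.filter (fun t => Zt t = z), cdev j (πs j z) t ≤
        ∑ t ∈ univ.filter (fun t => Zt t = z), cdev j p t)
    -- contextual external regrets
    (R : J → ℝ)
    (hR : ∀ j, R j = ∑ t, (cdev j (w t j) t - cdev j (πs j (Zt t)) t))
    -- optimal average social cost in pure strategy
    (ρstar : Z → (i : J) → A i) (Cstar : ℝ)
    (hCstar : Cstar = (T : ℝ)⁻¹ * ∑ t, ∑ j, u j (ρstar (Zt t)) (Zt t))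
    (hCstarmin : ∀ ρ : Z → (i : J) → A i,
      Cstar ≤ (T : ℝ)⁻¹ * ∑ t, ∑ j, u j (ρ (Zt t)) (Zt t)) :
    (T : ℝ)⁻¹ * ∑ t, ∑ j, cdev j (w t j) t
      ≤ (δ / (1 - μ)) * Cstar + (1 - μ)⁻¹ * ((T : ℝ)⁻¹ * ∑ j, R j) :=
  stmt1_general J A Z T Zt u δ μ hμ1 hsmooth w hw cdev hcdev πs hπsopt R hR ρstar Cstar hCstar
end

section
/- Suppose agent j uses a policy incurring contextual swap regret R̄^j_T = ∑_t [c^j(w^j_t, w^{-j}_t, Z_t) − c^j(λ^j_⋆(w^j_t, Z_t), w^{-j}_t, Z_t)], where λ^j_⋆ is the optimal context-dependent swap deviation. Then the empirical joint policy ν̂_T defined contextwise as the average of the product strategies is an ε-contextual correlated equilibrium with ε = max_j T^{-1} R̄^j_T: for every j and every swap function ϱ^j : A^j × Z → A^j, T^{-1} ∑_t E_{a~ν̂_T(Z_t)}[⟨φ^j(a), Z_t⟩] ≤ T^{-1} ∑_t E_{a~ν̂_T(Z_t)}[⟨φ^j(ϱ^j(a^j, Z_t), a^{-j}), Z_t⟩]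 + ε. -/
open Finset

/-- if every agent has contextual swap regret `R̄ j`, the empirical joint
policy `ν̂_T` is an ε-contextual correlated equilibrium with ε = max_j R̄ j / T. -/
theorem stmt3
    (J : Type*) [Fintype J] [DecidableEq J] [Nonempty J]
    (A : J → Type*) [∀ j, Fintype (A j)] [∀ j, DecidableEq (A j)] [∀ j, Nonempty (A j)]
    (Z : Type*) [DecidableEq Z]
    (T : ℕ) (hT : 0 < T) (Zt : Fin T → Z)
    (u : (j : J) → ((i : J) → A i) → Z → ℝ)
    (w : Fin T → (j : J) → A j → ℝ)
    (hw : ∀ t j, (∀ b, 0 ≤ w t j b) ∧ ∑ b, w t j b = 1)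
    -- cost of player j at time t when j plays p and the others play w t
    (cdev : (j : J) → (A j → ℝ) → Fin T → ℝ)
    (hcdev : ∀ j p t, cdev j p t =
      ∑ a : (i : J) → A i, (∏ i, (Function.update (w t) j p) i (a i)) * u j a (Zt t))
    -- optimal context-dependent swap comparator and swap regrets
    (lamstar : (j : J) → (A j → ℝ) → Z → A j → ℝ)
    (hlamdist : ∀ j v z, ((∀ b, 0 ≤ v b) ∧ ∑ b, v b = 1) →
      (∀ b, 0 ≤ lamstar j v z b) ∧ ∑ b, lamstar j v z b = 1)
    (hlamopt : ∀ j z (lam : (A j → ℝ) → A j → ℝ),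
      (∀ v, ((∀ b, 0 ≤ v b) ∧ ∑ b, v b = 1) → (∀ b, 0 ≤ lam v b) ∧ ∑ b, lam v b = 1) →
      ∑ t ∈ univ.filter (fun t => Zt t = z), cdev j (lamstar j (w t j) z) t ≤
        ∑ t ∈ univ.filter (fun t => Zt t = z), cdev j (lam (w t j)) t)
    (Rbar : J → ℝ)
    (hRbar : ∀ j, Rbar j =
      ∑ t, (cdev j (w t j) t - cdev j (lamstar j (w t j) (Zt t)) t))
    -- the empirical joint policy
    (νhat : Z → ((i : J) → A i) → ℝ)
    (hν : ∀ z a, νhat z a =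
      if (univ.filter (fun t => Zt t = z)).Nonempty then
        ((univ.filter (fun t => Zt t = z)).card : ℝ)⁻¹ *
          ∑ t ∈ univ.filter (fun t => Zt t = z), ∏ i, w t i (a i)
      else (Fintype.card ((i : J) → A i) : ℝ)⁻¹)
    (ε : ℝ) (hε : ε = univ.sup' univ_nonempty fun j => Rbar j / (T : ℝ)) :
    ∀ j (ϱ : A j → Z → A j),
      (T : ℝ)⁻¹ * ∑ t, ∑ a : (i : J) → A i, νhat (Zt t) a * u j a (Zt t)
        ≤ (T : ℝ)⁻¹ * ∑ t, ∑ a : (i : J) → A i, νhat (Zt t) a *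
            u j (Function.update a j (ϱ (a j) (Zt t))) (Zt t) + ε := by
  intro j ϱ
  classical
  -- the swap map at context z induced by ϱ
  set lamz : Z → (A j → ℝ) → A j → ℝ :=
    fun z v b => ∑ b' ∈ univ.filter (fun b' => ϱ b' z = b), v b' with hlamz
  have hlamzdist : ∀ z v, ((∀ b, 0 ≤ v b) ∧ ∑ b, v b = 1) →
      (∀ b, 0 ≤ lamz z v b) ∧ ∑ b, lamz z v b = 1 := by
    rintro z v ⟨h0, h1⟩
    constructor
    · intro b
      exact Finset.sum_nonneg fun b' _ => h0 b'
    · calc ∑ b, lamz z v b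
          = ∑ b, ∑ b' ∈ univ.filter (fun b' => ϱ b' z = b), v b' := rfl
        _ = ∑ b', v b' := Finset.sum_fiberwise_of_maps_to (fun b' _ => mem_univ _) v
        _ = 1 := h1
  -- Step A: replace the empirical policy by the time average of products
  have stepA : ∀ g : ((i : J) → A i) → Z → ℝ,
      ∑ t, ∑ a : (i : J) → A i, νhat (Zt t) a * g a (Zt t)
        = ∑ t, ∑ a : (i : J) → A i, (∏ i, w t i (a i)) * g a (Zt t) := by
    intro g
    rw [← Finset.sum_fiberwise_of_maps_to (t := univ.image Zt)
        (fun t _ => mem_image_of_mem Zt (mem_univ t))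
        (fun t => ∑ a : (i : J) → A i, νhat (Zt t) a * g a (Zt t)),
      ← Finset.sum_fiberwise_of_maps_to (t := univ.image Zt)
        (fun t _ => mem_image_of_mem Zt (mem_univ t))
        (fun t => ∑ a : (i : J) → A i, (∏ i, w t i (a i)) * g a (Zt t))]
    refine Finset.sum_congr rfl fun z hz => ?_
    have hzne : (univ.filter (fun t => Zt t = z)).Nonempty := by
      obtain ⟨t, -, ht⟩ := Finset.mem_image.1 hz
      exact ⟨t, Finset.mem_filter.2 ⟨mem_univ t, ht⟩⟩
    have hcard : ((univ.filter (fun t => Zt t = z)).card : ℝ) ≠ 0 := by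
      exact_mod_cast Finset.card_ne_zero.2 hzne
    calc ∑ t ∈ univ.filter (fun t => Zt t = z), ∑ a : (i : J) → A i, νhat (Zt t) a * g a (Zt t)
        = ∑ t ∈ univ.filter (fun t => Zt t = z), ∑ a : (i : J) → A i, νhat z a * g a z := by
          refine Finset.sum_congr rfl fun t ht => ?_
          rw [(Finset.mem_filter.1 ht).2]
      _ = ((univ.filter (fun t => Zt t = z)).card : ℝ) *
            ∑ a : (i : J) → A i, νhat z a * g a z := by
          rw [Finset.sum_const, nsmul_eq_mul]
      _ = ∑ a : (i : J) → A i,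
            (∑ s ∈ univ.filter (fun t => Zt t = z), ∏ i, w s i (a i)) * g a z := by
          rw [Finset.mul_sum]
          refine Finset.sum_congr rfl fun a _ => ?_
          rw [hν, if_pos hzne]
          field_simp
      _ = ∑ s ∈ univ.filter (fun t => Zt t = z),
            ∑ a : (i : J) → A i, (∏ i, w s i (a i)) * g a z := by
          rw [Finset.sum_comm]
          refine Finset.sum_congr rfl fun a _ => ?_
          rw [Finset.sum_mul]
      _ = ∑ t ∈ univ.filter (fun t => Zt t = z),
            ∑ a : (i : J) → A i, (∏ i, w t i (a i)) * g a (Zt t) := by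
          refine Finset.sum_congr rfl fun t ht => ?_
          rw [(Finset.mem_filter.1 ht).2]
  -- splitting the product at coordinate j
  have hsplit : ∀ (t : Fin T) (p : A j → ℝ) (a : (i : J) → A i),
      ∏ i, Function.update (w t) j p i (a i)
        = p (a j) * ∏ i ∈ univ.erase j, w t i (a i) := by
    intro t p a
    rw [← Finset.mul_prod_erase univ (fun i => Function.update (w t) j p i (a i)) (mem_univ j),
      Function.update_self]
    congr 1
    refine Finset.prod_congr rfl fun i hi => ?_
    rw [Function.update_of_ne (Finset.mem_erase.1 hi).1]
  have hPupd : ∀ (t : Fin T) (a : (i : J) → A i) (b : A j),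
      ∏ i ∈ univ.erase j, w t i (Function.update a j b i)
        = ∏ i ∈ univ.erase j, w t i (a i) := by
    intro t a b
    refine Finset.prod_congr rfl fun i hi => ?_
    rw [Function.update_of_ne (Finset.mem_erase.1 hi).1]
  -- claim 1: the undeviated cost
  have claim1 : ∀ t, cdev j (w t j) t
      = ∑ a : (i : J) → A i, (∏ i, w t i (a i)) * u j a (Zt t) := by
    intro t
    rw [hcdev, Function.update_eq_self]
  -- claim 2: the deviated cost equals cost of the induced swap on mixed strategies
  have claim2 : ∀ (t : Fin T) (z : Z),
      cdev j (lamz z (w t j)) t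
        = ∑ a : (i : J) → A i, (∏ i, w t i (a i)) *
            u j (Function.update a j (ϱ (a j) z)) (Zt t) := by
    intro t z
    rw [hcdev]
    calc ∑ a : (i : J) → A i,
          (∏ i, Function.update (w t) j (lamz z (w t j)) i (a i)) * u j a (Zt t)
        = ∑ a : (i : J) → A i, ∑ b' ∈ univ.filter (fun b' => ϱ b' z = a j),
            w t j b' * ((∏ i ∈ univ.erase j, w t i (a i)) * u j a (Zt t)) := by
          refine Finset.sum_congr rfl fun a _ => ?_
          rw [hsplit, mul_assoc, Finset.sum_mul]
      _ = ∑ x ∈ (univ ×ˢ univ).filter (fun x : ((i : J) → A i) × A j => ϱ x.2 z = x.1 j),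
            w t j x.2 * ((∏ i ∈ univ.erase j, w t i (x.1 i)) * u j x.1 (Zt t)) := by
          rw [Finset.sum_filter, Finset.sum_product]
          refine Finset.sum_congr rfl fun a _ => ?_
          rw [Finset.sum_filter]
      _ = ∑ a : (i : J) → A i, w t j (a j) * ((∏ i ∈ univ.erase j, w t i (a i)) *
            u j (Function.update a j (ϱ (a j) z)) (Zt t)) := by
          refine Finset.sum_bij' (fun x _ => Function.update x.1 j x.2)
            (fun a _ => (Function.update a j (ϱ (a j) z), a j)) (fun _ _ => mem_univ _)
            ?_ ?_ ?_ ?_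
          · intro a _
            simp [Function.update_self]
          · intro x hx
            have hx' : ϱ x.2 z = x.1 j := (Finset.mem_filter.1 hx).2
            simp [Prod.ext_iff, Function.update_idem, Function.update_self, hx',
              Function.update_eq_self]
          · intro a _
            simp [Function.update_idem, Function.update_self, Function.update_eq_self]
          · intro x hx
            have hx' : ϱ x.2 z = x.1 j := (Finset.mem_filter.1 hx).2
            simp [Function.update_self, Function.update_idem, hPupd, hx',
              Function.update_eq_self]
      _ = ∑ a : (i : J) → A i, (∏ i, w t i (a i)) *
            u j (Function.update a j (ϱ (a j) z)) (Zt t) := by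
          refine Finset.sum_congr rfl fun a _ => ?_
          rw [← Finset.mul_prod_erase univ (fun i => w t i (a i)) (mem_univ j)]
          ring
  -- Step C: the optimal contextual comparator beats the induced swap, contextwise
  have stepC : ∑ t, cdev j (lamstar j (w t j) (Zt t)) t
      ≤ ∑ t, cdev j (lamz (Zt t) (w t j)) t := by
    rw [← Finset.sum_fiberwise_of_maps_to (t := univ.image Zt)
        (fun t _ => mem_image_of_mem Zt (mem_univ t))
        (fun t => cdev j (lamstar j (w t j) (Zt t)) t),
      ← Finset.sum_fiberwise_of_maps_to (t := univ.image Zt)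
        (fun t _ => mem_image_of_mem Zt (mem_univ t))
        (fun t => cdev j (lamz (Zt t) (w t j)) t)]
    refine Finset.sum_le_sum fun z _ => ?_
    have h1 : ∑ t ∈ univ.filter (fun t => Zt t = z), cdev j (lamstar j (w t j) (Zt t)) t
        = ∑ t ∈ univ.filter (fun t => Zt t = z), cdev j (lamstar j (w t j) z) t := by
      refine Finset.sum_congr rfl fun t ht => ?_
      rw [(Finset.mem_filter.1 ht).2]
    have h2 : ∑ t ∈ univ.filter (fun t => Zt t = z), cdev j (lamz (Zt t) (w t j)) t
        = ∑ t ∈ univ.filter (fun t => Zt t = z), cdev j (lamz z (w t j)) t := by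
      refine Finset.sum_congr rfl fun t ht => ?_
      rw [(Finset.mem_filter.1 ht).2]
    rw [h1, h2]
    exact hlamopt j z (lamz z) (fun v hv => hlamzdist z v hv)
  -- assemble
  have hX : ∑ t, ∑ a : (i : J) → A i, νhat (Zt t) a * u j a (Zt t)
      = ∑ t, cdev j (w t j) t := by
    rw [stepA (fun a z => u j a z)]
    exact Finset.sum_congr rfl fun t _ => (claim1 t).symm
  have hY : ∑ t, ∑ a : (i : J) → A i, νhat (Zt t) a *
        u j (Function.update a j (ϱ (a j) (Zt t))) (Zt t)
      = ∑ t, cdev j (lamz (Zt t) (w t j)) t := by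
    rw [stepA (fun a z => u j (Function.update a j (ϱ (a j) z)) z)]
    exact Finset.sum_congr rfl fun t _ => (claim2 t (Zt t)).symm
  have hfin : ∑ t, cdev j (w t j) t
      ≤ ∑ t, cdev j (lamz (Zt t) (w t j)) t + Rbar j := by
    have h := hRbar j
    rw [Finset.sum_sub_distrib] at h
    linarith [stepC]
  have hεj : Rbar j / (T : ℝ) ≤ ε :=
    hε ▸ Finset.le_sup' (fun j => Rbar j / (T : ℝ)) (mem_univ j)
  have hTpos : (0 : ℝ) < (T : ℝ)⁻¹ := by
    have : (0 : ℝ) < (T : ℝ) := by exact_mod_cast hT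
    exact inv_pos.2 this
  rw [hX, hY]
  calc (T : ℝ)⁻¹ * ∑ t, cdev j (w t j) t
      ≤ (T : ℝ)⁻¹ * (∑ t, cdev j (lamz (Zt t) (w t j)) t + Rbar j) :=
        mul_le_mul_of_nonneg_left hfin (le_of_lt hTpos)
    _ = (T : ℝ)⁻¹ * ∑ t, cdev j (lamz (Zt t) (w t j)) t + Rbar j / (T : ℝ) := by ring
    _ ≤ (T : ℝ)⁻¹ * ∑ t, cdev j (lamz (Zt t) (w t j)) t + ε := by linarith
end

section
/- If player j runs an algorithm with contextual external regret bounded by f(J, T, K, m), then the contextual Blum–Mansour reduction (running K copies of the base algorithm, feeding copy k the loss scaled by w^j_t[k], and playing the stationary distribution w^j_t of the column-stochastic matrix P^j_t formed by the K copies' outputs) yields an algorithm whose contextual swap regret satisfies R̄^j_T ≤ K · f(J, T, K, m). -/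
open Finset

/-- contextual Blum–Mansour reduction: external regret ≤ F for each of the
K copies implies contextual swap regret ≤ K·F. -/
theorem stmt4 (K T : ℕ) (hK : 0 < K) (Z : Type*)
    (Zt : Fin T → Z)
    -- L t = Φ^j(w^{-j}_t)^⊤ Z_t, the loss vector over the K actions at round t
    (L : Fin T → Fin K → ℝ)
    -- outputs of the K copies of the base no-external-regret algorithm
    (p : Fin K → Fin T → Fin K → ℝ)
    (hp : ∀ k t, (∀ ℓ, 0 ≤ p k t ℓ) ∧ ∑ ℓ, p k t ℓ = 1)
    -- the played strategy: stationary distribution of the column-stochastic matrix P_t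
    (w : Fin T → Fin K → ℝ)
    (hw : ∀ t, (∀ ℓ, 0 ≤ w t ℓ) ∧ ∑ ℓ, w t ℓ = 1)
    (hfix : ∀ t ℓ, ∑ k, w t k * p k t ℓ = w t ℓ)
    -- each copy k, fed the loss scaled by w t k, has contextual external regret ≤ F
    (F : ℝ)
    (hext : ∀ k (πk : Z → Fin K → ℝ), (∀ z, (∀ ℓ, 0 ≤ πk z ℓ) ∧ ∑ ℓ, πk z ℓ = 1) →
      (∑ t, w t k * (∑ ℓ, L t ℓ * p k t ℓ)) -
        (∑ t, w t k * (∑ ℓ, L t ℓ * πk (Zt t) ℓ)) ≤ F) :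
    -- contextual swap regret against any action-level context-dependent swap
    ∀ ϱ : Fin K → Z → Fin K,
      (∑ t, ∑ ℓ, L t ℓ * w t ℓ) - (∑ t, ∑ k, w t k * L t (ϱ k (Zt t))) ≤ (K : ℝ) * F := by
  intro ϱ
  -- rewrite played loss using fixed point
  have h1 : (∑ t, ∑ ℓ, L t ℓ * w t ℓ)
      = ∑ k, ∑ t, w t k * (∑ ℓ, L t ℓ * p k t ℓ) := by
    rw [show (∑ k, ∑ t, w t k * (∑ ℓ, L t ℓ * p k t ℓ))
        = ∑ t, ∑ k, w t k * (∑ ℓ, L t ℓ * p k t ℓ) from Finset.sum_comm]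
    congr 1; ext t
    calc ∑ ℓ, L t ℓ * w t ℓ = ∑ ℓ, L t ℓ * ∑ k, w t k * p k t ℓ := by
          simp [hfix]
      _ = ∑ ℓ, ∑ k, w t k * (L t ℓ * p k t ℓ) := by
          congr 1; ext ℓ; rw [Finset.mul_sum]; congr 1; ext k; ring
      _ = ∑ k, w t k * ∑ ℓ, L t ℓ * p k t ℓ := by
          rw [Finset.sum_comm]; simp [Finset.mul_sum]
  have h2 : (∑ t, ∑ k, w t k * L t (ϱ k (Zt t)))
      = ∑ k, ∑ t, w t k * (∑ ℓ, L t ℓ * (if ℓ = ϱ k (Zt t) then (1:ℝ) else 0)) := by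
    rw [show (∑ k, ∑ t, w t k * (∑ ℓ, L t ℓ * (if ℓ = ϱ k (Zt t) then (1:ℝ) else 0)))
        = ∑ t, ∑ k, w t k * (∑ ℓ, L t ℓ * (if ℓ = ϱ k (Zt t) then (1:ℝ) else 0))
        from Finset.sum_comm]
    congr 1; ext t; congr 1; ext k
    simp [mul_ite]
  rw [h1, h2, ← Finset.sum_sub_distrib]
  have : ∀ k : Fin K,
      (∑ t, w t k * (∑ ℓ, L t ℓ * p k t ℓ)) -
        (∑ t, w t k * (∑ ℓ, L t ℓ * (if ℓ = ϱ k (Zt t) then (1:ℝ) else 0))) ≤ F := by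
    intro k
    exact hext k (fun z ℓ => if ℓ = ϱ k z then 1 else 0)
      (fun z => ⟨fun ℓ => by positivity, by simp⟩)
  calc ∑ k, ((∑ t, w t k * (∑ ℓ, L t ℓ * p k t ℓ)) -
        (∑ t, w t k * (∑ ℓ, L t ℓ * (if ℓ = ϱ k (Zt t) then (1:ℝ) else 0))))
      ≤ ∑ _k : Fin K, F := Finset.sum_le_sum (fun k _ => this k)
    _ = (K : ℝ) * F := by simp [mul_comm]
end
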